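/- arXiv:math/9512206 — 4 statements merged into one kernel-verified Lean document; each statement's English description precedes it below -/
import Mathlib

section
/- If X is a rearrangement-invariant function space on [0,1] satisfying ‖χ_{[0,1/2]}‖_X = ‖χ_{[0,1/2]} + η·χ_{[1/2,1]}‖_X and ‖χ_{[0,1/2]}‖_{X'} = ‖χ_{[0,1/2]} + η·χ_{[1/2,1]}‖_{X'} for some η > 0, then (1/2)(1+η²) ≤ ‖χ_{[0,1/2]}‖_X · ‖χ_{[0,1/2]}‖_{X'} = 1/2, a contradiction; hence no such η exists. -/
open MeasureTheory Set

/-- if `X` is an r.i. space on `[0,1]` (with Köthe dual norm `N'`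
satisfying Hölder's inequality and `‖χ_{[0,1/2]}‖_X ⬝ ‖χ_{[0,1/2]}‖_{X'} = 1/2`),
then there is no `η > 0` with
`‖χ_{[0,1/2]}‖_X = ‖χ_{[0,1/2]} + η χ_{[1/2,1]}‖_X` and likewise for `X'`. -/
theorem stmt_1 (N N' : (ℝ → ℝ) → ℝ)
    (hholder : ∀ f g : ℝ → ℝ,
      ∫ x in Icc (0:ℝ) 1, |f x * g x| ≤ N f * N' g)
    (hprod : N (Set.indicator (Icc (0:ℝ) (1/2)) fun _ => (1:ℝ)) *
        N' (Set.indicator (Icc (0:ℝ) (1/2)) fun _ => (1:ℝ)) = 1/2)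
    (η : ℝ) (hη : 0 < η)
    (h1 : N (Set.indicator (Icc (0:ℝ) (1/2)) fun _ => (1:ℝ)) =
      N (fun x => Set.indicator (Icc (0:ℝ) (1/2)) (fun _ => (1:ℝ)) x
          + η * Set.indicator (Icc (1/2:ℝ) 1) (fun _ => (1:ℝ)) x))
    (h2 : N' (Set.indicator (Icc (0:ℝ) (1/2)) fun _ => (1:ℝ)) =
      N' (fun x => Set.indicator (Icc (0:ℝ) (1/2)) (fun _ => (1:ℝ)) x
          + η * Set.indicator (Icc (1/2:ℝ) 1) (fun _ => (1:ℝ)) x)) :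
    False := by
  set f : ℝ → ℝ := fun x => Set.indicator (Icc (0:ℝ) (1/2)) (fun _ => (1:ℝ)) x
          + η * Set.indicator (Icc (1/2:ℝ) 1) (fun _ => (1:ℝ)) x with hf
  set g : ℝ → ℝ := fun x => Set.indicator (Icc (0:ℝ) (1/2)) (fun _ => (1:ℝ)) x
          + η^2 * Set.indicator (Ioc (1/2:ℝ) 1) (fun _ => (1:ℝ)) x with hg
  have key := hholder f f
  rw [← h1, ← h2, hprod] at key
  haveI hfin : IsFiniteMeasure (volume.restrict (Icc (0:ℝ) 1)) :=
    ⟨by rw [Measure.restrict_apply_univ, Real.volume_Icc]; exact ENNReal.ofReal_lt_top⟩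
  have hind : ∀ s : Set ℝ, MeasurableSet s →
      Integrable (s.indicator (fun _ => (1:ℝ))) (volume.restrict (Icc (0:ℝ) 1)) :=
    fun s hs => (integrable_const 1).indicator hs
  have hg_int : IntegrableOn g (Icc (0:ℝ) 1) volume := by
    exact Integrable.add (hind _ measurableSet_Icc)
      (Integrable.const_mul (hind _ measurableSet_Ioc) _)
  have hfmeas : Measurable f := by
    apply Measurable.add
    · exact (measurable_const.indicator measurableSet_Icc)
    · exact Measurable.const_mul (measurable_const.indicator measurableSet_Icc) _
  have hf_int : Integrable (fun x => |f x * f x|) (volume.restrict (Icc (0:ℝ) 1)) := by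
    refine Integrable.mono' (μ := volume.restrict (Icc (0:ℝ) 1))
      (integrable_const ((1+η)^2)) ((hfmeas.mul hfmeas).abs.aestronglyMeasurable) ?_
    filter_upwards with x
    have h1' : |Set.indicator (Icc (0:ℝ) (1/2)) (fun _ => (1:ℝ)) x| ≤ 1 := by
      rw [abs_le]; constructor <;> simp [Set.indicator_apply] <;> split <;> norm_num
    have h2' : |Set.indicator (Icc (1/2:ℝ) 1) (fun _ => (1:ℝ)) x| ≤ 1 := by
      rw [abs_le]; constructor <;> simp [Set.indicator_apply] <;> split <;> norm_num
    have : |f x| ≤ 1 + η := by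
      calc |f x| ≤ |Set.indicator (Icc (0:ℝ) (1/2)) (fun _ => (1:ℝ)) x|
          + |η * Set.indicator (Icc (1/2:ℝ) 1) (fun _ => (1:ℝ)) x| := abs_add_le _ _
        _ ≤ 1 + η := by
            rw [abs_mul, abs_of_pos hη]
            have := mul_le_mul_of_nonneg_left h2' hη.le
            linarith
    rw [Real.norm_eq_abs, abs_abs, abs_mul]
    calc |f x| * |f x| ≤ (1+η) * (1+η) :=
      mul_le_mul this this (abs_nonneg _) (by positivity)
      _ = (1+η)^2 := by ring
  have hmono : ∫ x in Icc (0:ℝ) 1, g x ≤ ∫ x in Icc (0:ℝ) 1, |f x * f x| := by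
    apply setIntegral_mono_on hg_int hf_int measurableSet_Icc
    intro x hx
    simp only [hf, hg, Set.indicator_apply]
    by_cases hx2 : x ≤ 1/2
    · have hmem : x ∈ Icc (0:ℝ) (1/2) := ⟨hx.1, hx2⟩
      have hnot : x ∉ Ioc (1/2:ℝ) 1 := fun h => absurd h.1 (not_lt.mpr hx2)
      simp only [if_pos hmem, if_neg hnot, mul_zero, add_zero]
      set t := if x ∈ Icc (1/2:ℝ) 1 then (1:ℝ) else 0 with ht
      have ht0 : 0 ≤ t := by rw [ht]; split <;> norm_num
      rw [abs_of_pos (by positivity)]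
      nlinarith [mul_nonneg hη.le ht0]
    · have hnot : x ∉ Icc (0:ℝ) (1/2) := fun h => absurd h.2 hx2
      have hmem1 : x ∈ Ioc (1/2:ℝ) 1 := ⟨lt_of_not_ge hx2, hx.2⟩
      have hmem2 : x ∈ Icc (1/2:ℝ) 1 := ⟨(lt_of_not_ge hx2).le, hx.2⟩
      simp only [if_neg hnot, if_pos hmem1, if_pos hmem2, mul_one, zero_add]
      rw [abs_of_pos (by positivity)]
      nlinarith
  have hgval : ∫ x in Icc (0:ℝ) 1, g x = 1/2 + η^2 * (1/2) := by
    rw [hg]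
    rw [MeasureTheory.integral_add (hind _ measurableSet_Icc)
        (Integrable.const_mul (hind _ measurableSet_Ioc) _)]
    rw [integral_const_mul]
    rw [setIntegral_indicator measurableSet_Icc, setIntegral_indicator measurableSet_Ioc]
    have e1 : Icc (0:ℝ) 1 ∩ Icc (0:ℝ) (1/2) = Icc (0:ℝ) (1/2) := by
      apply inter_eq_self_of_subset_right; exact Icc_subset_Icc le_rfl (by norm_num)
    have e2 : Icc (0:ℝ) 1 ∩ Ioc (1/2:ℝ) 1 = Ioc (1/2:ℝ) 1 := by
      apply inter_eq_self_of_subset_right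
      exact fun x hx => ⟨le_trans (by norm_num) hx.1.le, hx.2⟩
    rw [e1, e2]
    simp [Real.volume_Icc, Real.volume_Ioc]
    norm_num
  rw [hgval] at hmono
  nlinarith
end

section
/- Let F, G₁, G₂ be φ-functions. Then ‖f‖_{F,G₁} = ‖f‖_{F,G₂} for all measurable f if and only if ‖f‖_{1,G₁} = ‖f‖_{1,G₂} for all measurable f (where the subscript 1 denotes the identity φ-function). -/
open MeasureTheory Set

/-- A φ-function: continuous, strictly increasing on `[0,∞)`, `F(0)=0`, `F(1)=1`,
`F(t) → ∞`. -/
structure IsPhiFun (F : ℝ → ℝ) : Prop where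
  cont : ContinuousOn F (Ici 0)
  strictMono : StrictMonoOn F (Ici 0)
  zero : F 0 = 0
  one : F 1 = 1
  tendsto : Filter.Tendsto F Filter.atTop Filter.atTop

/-- `F̃(t) = 1/F(1/t)` for `t > 0`, and `F̃(0) = 0`. -/
noncomputable def phiTilde (F : ℝ → ℝ) (t : ℝ) : ℝ :=
  if 0 < t then (F t⁻¹)⁻¹ else 0

/-- The non-increasing rearrangement of `f` (measured on `[0,1]`). -/
noncomputable def decRearr (f : ℝ → ℝ) (x : ℝ) : ℝ :=
  sSup {t : ℝ | x ≤ (volume {y ∈ Icc (0:ℝ) 1 | t ≤ |f y|}).toReal}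

/-- The Luxemburg norm on `[0,1]` associated with `G`. -/
noncomputable def luxNorm (G : ℝ → ℝ) (g : ℝ → ℝ) : ℝ :=
  sInf {c : ℝ | 0 < c ∧ ∫ x in Icc (0:ℝ) 1, G (|g x| / c) ≤ 1}

/-- The Orlicz–Lorentz functional `‖f‖_{F,G} = ‖ f* ∘ F̃ ∘ G̃⁻¹ ‖_G`. -/
noncomputable def olNorm (F G : ℝ → ℝ) (f : ℝ → ℝ) : ℝ :=
  luxNorm G (fun x => decRearr f (phiTilde F (Function.invFun (phiTilde G) x)))

/-!
For a φ-function `F`, `F̃` is an increasing bijection of `(0, ∞)` fixing `1`, and `f*` is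
antitone, so `g = f* ∘ F̃` is a nonnegative antitone function on `(0, 1]`. Such a function
coincides with its own rearrangement `g*` at every point of left continuity, i.e. off a countable
set; as `G̃⁻¹` is injective, such a set is null after composing with `G̃⁻¹` and cannot be seen by
the Luxemburg norm. Hence `‖f‖_{F,G} = ‖f* ∘ F̃‖_{1,G}` for every `G`, and likewise
`‖g‖_{1,G} = ‖g* ∘ F̃⁻¹‖_{F,G}`. The two transformations `f ↦ f* ∘ F̃` and `g ↦ g* ∘ F̃⁻¹`
(both measurable, being monotone) carry each side of the equivalence to the other.
-/

namespace OrliczLorentz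

open Filter Topology Function

section Rearrangement

noncomputable def distribution (f : ℝ → ℝ) (t : ℝ) : ℝ :=
  (volume {y ∈ Icc (0:ℝ) 1 | t ≤ |f y|}).toReal

theorem decRearr_eq_sSup (f : ℝ → ℝ) (x : ℝ) :
    decRearr f x = sSup {t | x ≤ distribution f t} := rfl

theorem volume_superlevel_ne_top (f : ℝ → ℝ) (t : ℝ) :
    volume {y ∈ Icc (0:ℝ) 1 | t ≤ |f y|} ≠ ⊤ :=
  ne_top_of_le_ne_top measure_Icc_lt_top.ne (measure_mono (sep_subset _ _))

theorem distribution_le_one (f : ℝ → ℝ) (t : ℝ) : distribution f t ≤ 1 := by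
  have h : volume {y ∈ Icc (0:ℝ) 1 | t ≤ |f y|} ≤ 1 :=
    (measure_mono (sep_subset _ _)).trans (by simp [Real.volume_Icc])
  exact (ENNReal.toReal_mono ENNReal.one_ne_top h).trans_eq ENNReal.toReal_one

theorem le_distribution_zero (f : ℝ → ℝ) {x : ℝ} (hx : x ≤ 1) : x ≤ distribution f 0 := by
  have h : {y ∈ Icc (0:ℝ) 1 | 0 ≤ |f y|} = Icc 0 1 :=
    sep_eq_self_iff_mem_true.2 fun y _ => abs_nonneg _
  rw [distribution, h, Real.volume_Icc]
  simpa using hx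

theorem distribution_antitone (f : ℝ → ℝ) : Antitone (distribution f) := fun _ _ hst =>
  ENNReal.toReal_mono (volume_superlevel_ne_top f _)
    (measure_mono fun _ hy => ⟨hy.1, hst.trans hy.2⟩)

theorem tendsto_distribution_atTop {f : ℝ → ℝ} (hf : Measurable f) :
    Tendsto (distribution f) atTop (𝓝 0) := by
  have hlim := tendsto_measure_iInter_atTop (μ := volume)
    (s := fun t => {y ∈ Icc (0:ℝ) 1 | t ≤ |f y|})
    (fun _ =>
      (measurableSet_Icc.inter (measurableSet_le measurable_const hf.abs)).nullMeasurableSet)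
    (fun _ _ hst _ hy => ⟨hy.1, hst.trans hy.2⟩) ⟨0, volume_superlevel_ne_top f 0⟩
  have hempty : ⋂ t, {y ∈ Icc (0:ℝ) 1 | t ≤ |f y|} = ∅ :=
    eq_empty_of_forall_notMem fun y hy => by
      have := (mem_iInter.1 hy (|f y| + 1)).2
      linarith
  rw [hempty, measure_empty] at hlim
  exact (ENNReal.tendsto_toReal ENNReal.zero_ne_top).comp hlim

theorem bddAbove_distribution {f : ℝ → ℝ} (hf : Measurable f) {x : ℝ} (hx : 0 < x) :
    BddAbove {t | x ≤ distribution f t} := by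
  obtain ⟨t₀, ht₀⟩ := ((tendsto_distribution_atTop hf).eventually (gt_mem_nhds hx)).exists
  exact ⟨t₀, fun t ht => le_of_not_gt fun h =>
    (ht.trans (distribution_antitone f h.le)).not_gt ht₀⟩

theorem decRearr_of_one_lt (f : ℝ → ℝ) {x : ℝ} (hx : 1 < x) : decRearr f x = 0 := by
  have h : {t | x ≤ distribution f t} = ∅ := eq_empty_of_forall_notMem fun t ht =>
    (ht.out.trans (distribution_le_one f t)).not_gt hx
  rw [decRearr_eq_sSup, h, Real.sSup_empty]

theorem decRearr_nonneg (f : ℝ → ℝ) (x : ℝ) : 0 ≤ decRearr f x := by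
  rcases le_or_gt x 1 with hx | hx
  · exact Real.sSup_nonneg' ⟨0, le_distribution_zero f hx, le_rfl⟩
  · rw [decRearr_of_one_lt f hx]

theorem decRearr_antitoneOn {f : ℝ → ℝ} (hf : Measurable f) :
    AntitoneOn (decRearr f) (Ioi 0) := by
  intro x hx x' _ hxx'
  rcases le_or_gt x' 1 with hx' | hx'
  · exact csSup_le_csSup (bddAbove_distribution hf hx) ⟨0, le_distribution_zero f hx'⟩
      fun t ht => hxx'.trans ht
  · rw [decRearr_of_one_lt f hx']
    exact decRearr_nonneg f x

end Rearrangement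

section AntitoneRearrangement

variable {g : ℝ → ℝ}

theorem distribution_le_of_antitoneOn (hg : AntitoneOn g (Ioc 0 1))
    (hg₀ : ∀ y ∈ Ioc (0:ℝ) 1, 0 ≤ g y) {y t : ℝ} (hy : y ∈ Ioc (0:ℝ) 1) (ht : g y < t) :
    distribution g t ≤ y := by
  have hsub : {z ∈ Icc (0:ℝ) 1 | t ≤ |g z|} ⊆ Ico 0 y := by
    rintro z ⟨hz, hzt⟩
    refine ⟨hz.1, lt_of_not_ge fun hyz => hzt.not_gt ?_⟩
    have hz' : z ∈ Ioc (0:ℝ) 1 := ⟨hy.1.trans_le hyz, hz.2⟩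
    rw [abs_of_nonneg (hg₀ z hz')]
    exact (hg hy hz' hyz).trans_lt ht
  calc distribution g t ≤ (volume (Ico 0 y)).toReal :=
        ENNReal.toReal_mono (by simp) (measure_mono hsub)
    _ = y := by simp [hy.1.le]

theorem le_distribution_of_antitoneOn (hg : AntitoneOn g (Ioc 0 1)) {x : ℝ}
    (hx : x ∈ Ioc (0:ℝ) 1) : x ≤ distribution g (g x) := by
  have hsub : Ioc 0 x ⊆ {z ∈ Icc (0:ℝ) 1 | g x ≤ |g z|} := fun z hz =>
    ⟨⟨hz.1.le, hz.2.trans hx.2⟩, (hg ⟨hz.1, hz.2.trans hx.2⟩ hx hz.2).trans (le_abs_self _)⟩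
  calc x = (volume (Ioc 0 x)).toReal := by simp [hx.1.le]
    _ ≤ distribution g (g x) :=
        ENNReal.toReal_mono (volume_superlevel_ne_top g _) (measure_mono hsub)

theorem decRearr_eq_of_continuousWithinAt (hg : AntitoneOn g (Ioc 0 1))
    (hg₀ : ∀ y ∈ Ioc (0:ℝ) 1, 0 ≤ g y) {x : ℝ} (hx : x ∈ Ioc (0:ℝ) 1)
    (hcont : ContinuousWithinAt g (Ioc 0 1) x) : decRearr g x = g x := by
  have hbdd : BddAbove {t | x ≤ distribution g t} := by
    refine ⟨g (x / 2), fun t ht => le_of_not_gt fun h => ?_⟩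
    have := distribution_le_of_antitoneOn hg hg₀ ⟨half_pos hx.1, by linarith [hx.2]⟩ h
    linarith [ht.out, hx.1]
  refine le_antisymm (csSup_le ⟨g x, le_distribution_of_antitoneOn hg hx⟩ fun t ht => ?_)
    (le_csSup hbdd (le_distribution_of_antitoneOn hg hx))
  by_contra! hlt
  -- left continuity at `x` gives a point `y < x` with `g y < t`, forcing `distribution g t ≤ y`
  obtain ⟨y, hgy, hy⟩ : ∃ y, g y < t ∧ y ∈ Ioo 0 x := by
    have hleft := hcont.mono fun y (hy : y ∈ Ioo 0 x) => ⟨hy.1, hy.2.le.trans hx.2⟩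
    rw [ContinuousWithinAt, nhdsWithin_Ioo_eq_nhdsLT hx.1] at hleft
    exact ((hleft.eventually (gt_mem_nhds hlt)).and (Ioo_mem_nhdsLT hx.1)).exists
  exact (ht.out.trans (distribution_le_of_antitoneOn hg hg₀ ⟨hy.1, hy.2.le.trans hx.2⟩ hgy)).not_gt
    hy.2

theorem exists_countable_decRearr_eq_of_antitoneOn (hg : AntitoneOn g (Ioc 0 1))
    (hg₀ : ∀ y ∈ Ioc (0:ℝ) 1, 0 ≤ g y) :
    ∃ D : Set ℝ, D.Countable ∧ ∀ x ∈ Ioc (0:ℝ) 1, x ∉ D → decRearr g x = g x :=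
  ⟨_, hg.countable_not_continuousWithinAt, fun _ hx hxD =>
    decRearr_eq_of_continuousWithinAt hg hg₀ hx (not_not.1 fun h => hxD ⟨hx, h⟩)⟩

end AntitoneRearrangement

theorem measurable_of_antitoneOn_Ioi {g : ℝ → ℝ} {a : ℝ} (hg : AntitoneOn g (Ioi a))
    (hconst : ∀ t ≤ a, g t = g a) : Measurable g := by
  refine measurable_of_Ici fun c => OrdConnected.measurableSet ⟨?_⟩
  rintro x₁ h₁ x₂ h₂ y ⟨hy₁, hy₂⟩
  simp only [mem_preimage, mem_Ici] at h₁ h₂ ⊢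
  rcases le_or_gt y a with hya | hya
  · rwa [hconst y hya, ← hconst x₁ (hy₁.trans hya)]
  · exact h₂.trans (hg hya (hya.trans_le hy₂) hy₂)

section PhiTilde

variable {H : ℝ → ℝ}

theorem _root_.IsPhiFun.pos (hH : IsPhiFun H) {t : ℝ} (ht : 0 < t) : 0 < H t :=
  hH.zero ▸ hH.strictMono (mem_Ici.2 le_rfl) ht.le ht

theorem phiTilde_of_nonpos {t : ℝ} (ht : t ≤ 0) : phiTilde H t = 0 :=
  if_neg ht.not_gt

theorem phiTilde_id {t : ℝ} (ht : 0 < t) : phiTilde (fun s => s) t = t := by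
  rw [phiTilde, if_pos ht, inv_inv]

theorem phiTilde_one (hH : IsPhiFun H) : phiTilde H 1 = 1 := by
  simp [phiTilde, hH.one]

theorem phiTilde_pos (hH : IsPhiFun H) {t : ℝ} (ht : 0 < t) : 0 < phiTilde H t := by
  rw [phiTilde, if_pos ht]
  exact inv_pos.2 (hH.pos (inv_pos.2 ht))

theorem phiTilde_strictMonoOn (hH : IsPhiFun H) : StrictMonoOn (phiTilde H) (Ioi 0) := by
  intro s (hs : 0 < s) t (ht : 0 < t) hst
  rw [phiTilde, if_pos hs, phiTilde, if_pos ht]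
  exact inv_strictAnti₀ (hH.pos (inv_pos.2 ht))
    (hH.strictMono (inv_pos.2 ht).le (inv_pos.2 hs).le (inv_strictAnti₀ hs hst))

theorem mapsTo_phiTilde (hH : IsPhiFun H) : MapsTo (phiTilde H) (Ioc 0 1) (Ioc 0 1) :=
  fun _ ht => ⟨phiTilde_pos hH ht.1, phiTilde_one hH ▸
    ((phiTilde_strictMonoOn hH).le_iff_le ht.1 (one_pos : (0:ℝ) < 1)).2 ht.2⟩

theorem surjOn_phiTilde (hH : IsPhiFun H) : SurjOn (phiTilde H) (Ioi 0) (Ioi 0) := by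
  intro x (hx : 0 < x)
  obtain ⟨M, hM, hM₀⟩ := ((hH.tendsto.eventually_ge_atTop x⁻¹).and (eventually_ge_atTop 0)).exists
  obtain ⟨a, ha, hax⟩ := intermediate_value_Icc hM₀ (hH.cont.mono Icc_subset_Ici_self)
    ⟨by rw [hH.zero]; exact (inv_pos.2 hx).le, hM⟩
  have ha₀ : 0 < a := ha.1.lt_of_ne fun h => by
    rw [← h, hH.zero] at hax
    exact (inv_pos.2 hx).ne hax
  exact ⟨a⁻¹, inv_pos.2 ha₀, by rw [phiTilde, if_pos (inv_pos.2 ha₀), inv_inv, hax, inv_inv]⟩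

theorem phiTilde_invFun (hH : IsPhiFun H) {x : ℝ} (hx : 0 < x) :
    phiTilde H (invFun (phiTilde H) x) = x :=
  invFun_eq (let ⟨t, _, ht⟩ := surjOn_phiTilde hH hx; ⟨t, ht⟩)

theorem invFun_phiTilde_pos (hH : IsPhiFun H) {x : ℝ} (hx : 0 < x) :
    0 < invFun (phiTilde H) x := by
  by_contra! h
  have := phiTilde_invFun hH hx
  rw [phiTilde_of_nonpos h] at this
  exact hx.ne this

theorem invFun_phiTilde_apply (hH : IsPhiFun H) {t : ℝ} (ht : 0 < t) :
    invFun (phiTilde H) (phiTilde H t) = t :=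
  (phiTilde_strictMonoOn hH).injOn (invFun_phiTilde_pos hH (phiTilde_pos hH ht)) ht
    (phiTilde_invFun hH (phiTilde_pos hH ht))

theorem invFun_phiTilde_le_iff (hH : IsPhiFun H) {x y : ℝ} (hx : 0 < x) (hy : 0 < y) :
    invFun (phiTilde H) x ≤ invFun (phiTilde H) y ↔ x ≤ y := by
  rw [← (phiTilde_strictMonoOn hH).le_iff_le (invFun_phiTilde_pos hH hx)
    (invFun_phiTilde_pos hH hy), phiTilde_invFun hH hx, phiTilde_invFun hH hy]

theorem mapsTo_invFun_phiTilde (hH : IsPhiFun H) :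
    MapsTo (invFun (phiTilde H)) (Ioc 0 1) (Ioc 0 1) := fun x hx => by
  refine ⟨invFun_phiTilde_pos hH hx.1, ?_⟩
  have := (invFun_phiTilde_le_iff hH hx.1 (phiTilde_pos hH one_pos)).2
    (hx.2.trans_eq (phiTilde_one hH).symm)
  rwa [invFun_phiTilde_apply hH one_pos] at this

end PhiTilde

theorem luxNorm_congr_ae (G : ℝ → ℝ) {g₁ g₂ : ℝ → ℝ}
    (h : ∀ᵐ x ∂volume.restrict (Icc (0:ℝ) 1), g₁ x = g₂ x) : luxNorm G g₁ = luxNorm G g₂ := by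
  have hint : ∀ c : ℝ, ∫ x in Icc (0:ℝ) 1, G (|g₁ x| / c) = ∫ x in Icc (0:ℝ) 1, G (|g₂ x| / c) :=
    fun c => integral_congr_ae (h.mono fun x hx => by simp only [hx])
  simp only [luxNorm, hint]

theorem olNorm_eq_olNorm_id_of_eqOn {F G f g : ℝ → ℝ} (hG : IsPhiFun G) {D : Set ℝ}
    (hD : D.Countable)
    (h : ∀ t ∈ Ioc (0:ℝ) 1, t ∉ D → decRearr f (phiTilde F t) = decRearr g t) :
    olNorm F G f = olNorm (fun t => t) G g := by
  apply luxNorm_congr_ae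
  have hnull : volume ({0} ∪ phiTilde G '' D) = 0 :=
    ((countable_singleton 0).union (hD.image _)).measure_zero _
  rw [ae_restrict_iff' measurableSet_Icc]
  filter_upwards [measure_eq_zero_iff_ae_notMem.1 hnull] with x hx hx₀₁
  have hx₀ : 0 < x := hx₀₁.1.lt_of_ne' fun h => hx (Or.inl h)
  have hux := mapsTo_invFun_phiTilde hG ⟨hx₀, hx₀₁.2⟩
  have huD : invFun (phiTilde G) x ∉ D := fun h => hx (Or.inr ⟨_, h, phiTilde_invFun hG hx₀⟩)
  rw [phiTilde_id hux.1]
  exact h _ hux huD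

section Transfer

variable {F : ℝ → ℝ}

noncomputable def decRearrCompTilde (F f : ℝ → ℝ) (t : ℝ) : ℝ :=
  decRearr f (phiTilde F t)

noncomputable def decRearrCompTildeInv (F g : ℝ → ℝ) (x : ℝ) : ℝ :=
  if 0 < x then decRearr g (invFun (phiTilde F) x) else 0

theorem antitoneOn_decRearrCompTilde (hF : IsPhiFun F) {f : ℝ → ℝ} (hf : Measurable f) :
    AntitoneOn (decRearrCompTilde F f) (Ioi 0) := fun _ hs _ ht hst =>
  decRearr_antitoneOn hf (phiTilde_pos hF hs) (phiTilde_pos hF ht)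
    (((phiTilde_strictMonoOn hF).le_iff_le hs ht).2 hst)

theorem measurable_decRearrCompTilde (hF : IsPhiFun F) {f : ℝ → ℝ} (hf : Measurable f) :
    Measurable (decRearrCompTilde F f) :=
  measurable_of_antitoneOn_Ioi (antitoneOn_decRearrCompTilde hF hf) fun _ ht => by
    simp only [decRearrCompTilde, phiTilde_of_nonpos ht, phiTilde_of_nonpos le_rfl]

theorem antitoneOn_decRearrCompTildeInv (hF : IsPhiFun F) {g : ℝ → ℝ} (hg : Measurable g) :
    AntitoneOn (decRearrCompTildeInv F g) (Ioi 0) := by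
  intro x (hx : 0 < x) y (hy : 0 < y) hxy
  simp only [decRearrCompTildeInv, if_pos hx, if_pos hy]
  exact decRearr_antitoneOn hg (invFun_phiTilde_pos hF hx) (invFun_phiTilde_pos hF hy)
    ((invFun_phiTilde_le_iff hF hx hy).2 hxy)

theorem measurable_decRearrCompTildeInv (hF : IsPhiFun F) {g : ℝ → ℝ} (hg : Measurable g) :
    Measurable (decRearrCompTildeInv F g) :=
  measurable_of_antitoneOn_Ioi (antitoneOn_decRearrCompTildeInv hF hg) fun _ hx => by
    simp only [decRearrCompTildeInv, if_neg hx.not_gt, lt_irrefl, if_false]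

theorem olNorm_eq_olNorm_id_decRearrCompTilde (hF : IsPhiFun F) {G f : ℝ → ℝ}
    (hG : IsPhiFun G) (hf : Measurable f) :
    olNorm F G f = olNorm (fun t => t) G (decRearrCompTilde F f) := by
  obtain ⟨D, hD, hDeq⟩ := exists_countable_decRearr_eq_of_antitoneOn
    ((antitoneOn_decRearrCompTilde hF hf).mono Ioc_subset_Ioi_self)
    fun _ _ => decRearr_nonneg _ _
  exact olNorm_eq_olNorm_id_of_eqOn hG hD fun t ht htD => (hDeq t ht htD).symm

theorem olNorm_id_eq_olNorm_decRearrCompTildeInv (hF : IsPhiFun F) {G g : ℝ → ℝ}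
    (hG : IsPhiFun G) (hg : Measurable g) :
    olNorm (fun t => t) G g = olNorm F G (decRearrCompTildeInv F g) := by
  obtain ⟨D, hD, hDeq⟩ := exists_countable_decRearr_eq_of_antitoneOn
    ((antitoneOn_decRearrCompTildeInv hF hg).mono Ioc_subset_Ioi_self)
    fun y hy => by
      rw [decRearrCompTildeInv, if_pos hy.1]
      exact decRearr_nonneg _ _
  refine (olNorm_eq_olNorm_id_of_eqOn hG (hD.image (invFun (phiTilde F))) fun t ht htD => ?_).symm
  have hs := mapsTo_phiTilde hF ht
  have hsD : phiTilde F t ∉ D := fun h => htD ⟨_, h, invFun_phiTilde_apply hF ht.1⟩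
  rw [hDeq _ hs hsD, decRearrCompTildeInv, if_pos hs.1, invFun_phiTilde_apply hF ht.1]

end Transfer

end OrliczLorentz

open OrliczLorentz

/-- for φ-functions `F, G₁, G₂`: `‖f‖_{F,G₁} = ‖f‖_{F,G₂}` for all
measurable `f` iff `‖f‖_{1,G₁} = ‖f‖_{1,G₂}` for all measurable `f`, where `1`
denotes the identity φ-function. -/
theorem stmt_5 (F G₁ G₂ : ℝ → ℝ) (hF : IsPhiFun F) (hG₁ : IsPhiFun G₁) (hG₂ : IsPhiFun G₂) :
    (∀ f : ℝ → ℝ, Measurable f → olNorm F G₁ f = olNorm F G₂ f) ↔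
    (∀ f : ℝ → ℝ, Measurable f → olNorm (fun t => t) G₁ f = olNorm (fun t => t) G₂ f) := by
  constructor
  · intro h g hg
    rw [olNorm_id_eq_olNorm_decRearrCompTildeInv hF hG₁ hg,
      olNorm_id_eq_olNorm_decRearrCompTildeInv hF hG₂ hg]
    exact h _ (measurable_decRearrCompTildeInv hF hg)
  · intro h f hf
    rw [olNorm_eq_olNorm_id_decRearrCompTilde hF hG₁ hf,
      olNorm_eq_olNorm_id_decRearrCompTilde hF hG₂ hf]
    exact h _ (measurable_decRearrCompTilde hF hf)
end

section
/- Let G₁, G₂, H be φ-functions. If ‖f‖_{1,G₁} = ‖f‖_{1,G₂} for all measurable f, then ‖f‖_{1,G₁∘H} = ‖f‖_{1,G₂∘H} for all measurable f. -/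
open MeasureTheory Set

/-!
The hypothesis already forces `G₁ = G₂` on `[0, ∞)`, and the functionals in the conclusion only
evaluate `G₁ ∘ H`, `G₂ ∘ H` at nonnegative arguments.

To recover `G` from `‖·‖_{1,G}`, test on two-step functions `b₁ 1_{(0,a₁]} + b₂ 1_{(a₁,a₂]}`.
Such a function is its own rearrangement, and composing with `G̃⁻¹` merely moves the jumps to
`G̃ a₁, G̃ a₂`, so its norm is the `c` at which `G (b₁/c) G̃ a₁ + G (b₂/c) (G̃ a₂ - G̃ a₁) = 1`.
For `a = s⁻¹` and `c = 1` this reads `G b₁ G s₂ + G b₂ (G s₁ - G s₂) = G s₁ G s₂`, a relation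
that `φ = G₂ ∘ G₁⁻¹` must therefore preserve. Writing `q u = φ (1 + u) - 1` (`excess φ`), the
case `b₂ = 1` makes `q` both multiplicative and "additive" (`q (x + y - 1) = q x + q y - 1`) on
`[1, ∞)`, whence `q (2ⁿ) = 2ⁿ`, `q` is within a factor `2` of the identity, and
`q (xⁿ) = (q x)ⁿ` forces `q x = x`. The case `s₂ = 1` then gives `φ = id` on `[0, 1)` too.
-/

open Filter

namespace IsPhiFun

variable {K : ℝ → ℝ}

lemma nonneg (hK : IsPhiFun K) {t : ℝ} (ht : 0 ≤ t) : 0 ≤ K t :=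
  hK.zero ▸ hK.strictMono.monotoneOn self_mem_Ici ht ht

lemma pos_s6 (hK : IsPhiFun K) {t : ℝ} (ht : 0 < t) : 0 < K t :=
  hK.zero ▸ hK.strictMono self_mem_Ici ht.le ht

lemma surjOn (hK : IsPhiFun K) : SurjOn K (Ici 0) (Ici 0) := by
  intro w hw
  obtain ⟨T, hwT, hT⟩ :=
    ((hK.tendsto.eventually_ge_atTop w).and (eventually_ge_atTop (0 : ℝ))).exists
  obtain ⟨t, ht, hKt⟩ := intermediate_value_Icc hT (hK.cont.mono Icc_subset_Ici_self)
    ⟨hK.zero.symm ▸ hw, hwT⟩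
  exact ⟨t, ht.1, hKt⟩

section invFunOn

variable (hK : IsPhiFun K)
include hK

lemma apply_invFunOn {w : ℝ} (hw : 0 ≤ w) :
    0 ≤ Function.invFunOn K (Ici 0) w ∧ K (Function.invFunOn K (Ici 0) w) = w :=
  Function.invFunOn_pos (hK.surjOn hw)

lemma invFunOn_apply {t : ℝ} (ht : 0 ≤ t) : Function.invFunOn K (Ici 0) (K t) = t :=
  hK.strictMono.injOn.leftInvOn_invFunOn ht

lemma le_invFunOn_iff {t w : ℝ} (ht : 0 ≤ t) (hw : 0 ≤ w) :
    t ≤ Function.invFunOn K (Ici 0) w ↔ K t ≤ w := by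
  obtain ⟨hv, hKv⟩ := hK.apply_invFunOn hw
  conv_rhs => rw [← hKv]
  exact (hK.strictMono.le_iff_le ht hv).symm

end invFunOn

end IsPhiFun

section phiTilde

variable {K : ℝ → ℝ}

lemma phiTilde_of_pos {t : ℝ} (ht : 0 < t) : phiTilde K t = (K t⁻¹)⁻¹ := if_pos ht

lemma phiTilde_inv {s : ℝ} (hs : 0 < s) : phiTilde K s⁻¹ = (K s)⁻¹ := by
  rw [phiTilde_of_pos (inv_pos.2 hs), inv_inv]

lemma phiTilde_id_of_pos {t : ℝ} (ht : 0 < t) : phiTilde (fun s => s) t = t := by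
  rw [phiTilde_of_pos ht, inv_inv]

variable (hK : IsPhiFun K)
include hK

lemma phiTilde_pos {t : ℝ} (ht : 0 < t) : 0 < phiTilde K t := by
  rw [phiTilde_of_pos ht]
  exact inv_pos.2 (hK.pos_s6 (inv_pos.2 ht))

lemma phiTilde_one : phiTilde K 1 = 1 := by
  rw [phiTilde_of_pos one_pos, inv_one, hK.one, inv_one]

lemma strictMonoOn_phiTilde : StrictMonoOn (phiTilde K) (Ioi 0) := by
  intro s hs t ht hst
  rw [phiTilde_of_pos hs, phiTilde_of_pos ht]
  have ht' : 0 < t⁻¹ := inv_pos.2 ht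
  exact inv_strictAnti₀ (hK.pos_s6 ht')
    (hK.strictMono (mem_Ici.2 ht'.le) (mem_Ici.2 (inv_pos.2 hs).le) (inv_strictAnti₀ hs hst))

lemma phiTilde_invFun {x : ℝ} (hx : 0 < x) :
    0 < Function.invFun (phiTilde K) x ∧ phiTilde K (Function.invFun (phiTilde K) x) = x := by
  obtain ⟨s, hs, hKs⟩ := hK.surjOn (inv_pos.2 hx).le
  have hs0 : 0 < s := lt_of_le_of_ne hs fun h => by
    rw [← h, hK.zero] at hKs
    exact (inv_pos.2 hx).ne hKs
  have hx' : phiTilde K (Function.invFun (phiTilde K) x) = x :=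
    Function.invFun_eq ⟨s⁻¹, by rw [phiTilde_inv hs0, hKs, inv_inv]⟩
  refine ⟨?_, hx'⟩
  by_contra hle
  rw [phiTilde, if_neg hle] at hx'
  exact hx.ne hx'

end phiTilde

lemma le_of_forall_pow_le_two_mul {a b : ℝ} (hb : 0 < b) (h : ∀ n : ℕ, a ^ n ≤ 2 * b ^ n) :
    a ≤ b := by
  by_contra hba
  obtain ⟨n, hn⟩ := pow_unbounded_of_one_lt 2 ((one_lt_div hb).2 (not_le.1 hba))
  rw [div_pow, lt_div_iff₀ (pow_pos hb n)] at hn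
  linarith [h n]

def PreservesTwoStepRelation (φ : ℝ → ℝ) : Prop :=
  ∀ ⦃U₁ U₂ B₁ B₂ : ℝ⦄, 1 ≤ U₂ → U₂ ≤ U₁ → 0 ≤ B₂ → B₂ ≤ B₁ →
    B₁ * U₂ + B₂ * (U₁ - U₂) = U₁ * U₂ → φ B₁ * φ U₂ + φ B₂ * (φ U₁ - φ U₂) = φ U₁ * φ U₂

def excess (φ : ℝ → ℝ) (u : ℝ) : ℝ := φ (1 + u) - 1

section excess

variable {φ : ℝ → ℝ} (hmono : StrictMonoOn φ (Ici 1)) (h1 : φ 1 = 1)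
include hmono

lemma excess_lt_excess {u v : ℝ} (hu : 0 ≤ u) (huv : u < v) : excess φ u < excess φ v := by
  have := hmono (mem_Ici.2 (by linarith : (1 : ℝ) ≤ 1 + u))
    (mem_Ici.2 (by linarith : (1 : ℝ) ≤ 1 + v)) (by linarith)
  simp only [excess]
  linarith

lemma excess_le_excess {u v : ℝ} (hu : 0 ≤ u) (huv : u ≤ v) : excess φ u ≤ excess φ v :=
  huv.eq_or_lt.elim (fun h => h ▸ le_rfl) fun h => (excess_lt_excess hmono hu h).le

include h1

lemma excess_pos {u : ℝ} (hu : 0 < u) : 0 < excess φ u := by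
  have := excess_lt_excess hmono le_rfl hu
  rwa [excess, add_zero, h1, sub_self] at this

end excess

namespace PreservesTwoStepRelation

variable {φ : ℝ → ℝ} (hφ : PreservesTwoStepRelation φ) (h1 : φ 1 = 1)
  (hmono : StrictMonoOn φ (Ici 1))

section
include hφ h1

lemma excess_mul_one_add {σ z : ℝ} (hσ : 0 < σ) (hz : σ ≤ z) :
    excess φ z * (1 + excess φ σ) = excess φ σ * (1 + excess φ (z + z / σ - 1)) := by
  have hzσ : 1 ≤ z / σ := (one_le_div hσ).2 hz
  have hU : (1 + σ) * z / σ = 1 + (z + z / σ - 1) := by field_simp; ring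
  have := @hφ ((1 + σ) * z / σ) (1 + σ) (1 + z) 1 (by linarith)
    (by rw [mul_div_assoc]; nlinarith) zero_le_one (by linarith) (by field_simp; ring)
  rw [h1, hU] at this
  simp only [excess]
  linear_combination this

end

include hφ h1 hmono

lemma excess_one : excess φ 1 = 1 := by
  have hE₁ := hφ.excess_mul_one_add h1 (by norm_num : (0 : ℝ) < 1 / 2)
    (by norm_num : (1 : ℝ) / 2 ≤ 1)
  have hE₂ := hφ.excess_mul_one_add h1 (by norm_num : (0 : ℝ) < 1 / 3)
    (by norm_num : (1 : ℝ) / 3 ≤ 1 / 2)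
  have hE₃ := hφ.excess_mul_one_add h1 (by norm_num : (0 : ℝ) < 1 / 3)
    (by norm_num : (1 : ℝ) / 3 ≤ 1)
  have hE₄ := hφ.excess_mul_one_add h1 one_pos (by norm_num : (1 : ℝ) ≤ 2)
  rw [show (1 : ℝ) + 1 / (1 / 2) - 1 = 2 by norm_num] at hE₁
  rw [show (1 : ℝ) / 2 + 1 / 2 / (1 / 3) - 1 = 1 by norm_num] at hE₂
  rw [show (1 : ℝ) + 1 / (1 / 3) - 1 = 3 by norm_num] at hE₃
  rw [show (2 : ℝ) + 2 / 1 - 1 = 3 by norm_num] at hE₄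
  -- eliminating `v₂` and `v₃` from these four instances leaves `k (k - 1) (u₂ - k) = 0`
  set k := excess φ 1
  set u₂ := excess φ 2
  set v₂ := excess φ (1 / 2)
  set v₃ := excess φ (1 / 3)
  have hk : 0 < k := excess_pos hmono h1 one_pos
  have hku₂ : k < u₂ := excess_lt_excess hmono zero_le_one one_lt_two
  have hQ₂ : v₂ * (1 + u₂ - k) = k := by linear_combination -hE₁
  have hQ₃ : v₃ * (1 + k - v₂) = v₂ := by linear_combination -hE₂
  have hQ₁ : v₃ * (u₂ * (1 + k) - k ^ 2) = k ^ 2 := by linear_combination v₃ * hE₄ - k * hE₃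
  have hQ₄ : v₂ * u₂ = k ^ 2 := mul_right_cancel₀ (by positivity : 1 + k ≠ 0) <| by
    linear_combination (1 + k - v₂) * hQ₁ - (u₂ * (1 + k) - k ^ 2) * hQ₃
  have hfac : k * ((k - 1) * (u₂ - k)) = 0 := by
    linear_combination u₂ * hQ₂ - (1 + u₂ - k) * hQ₄
  rcases mul_eq_zero.1 ((mul_eq_zero.1 hfac).resolve_left hk.ne') with h | h <;> linarith

lemma excess_mul_excess_inv {σ : ℝ} (hσ : 0 < σ) : excess φ σ * excess φ σ⁻¹ = 1 := by
  have base : ∀ τ : ℝ, 0 < τ → τ ≤ 1 → excess φ τ * excess φ τ⁻¹ = 1 := fun τ hτ hτ1 => by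
    have hE := hφ.excess_mul_one_add h1 hτ hτ1
    rw [show (1 : ℝ) + 1 / τ - 1 = τ⁻¹ by ring, hφ.excess_one h1 hmono] at hE
    linear_combination -hE
  rcases le_or_gt σ 1 with h | h
  · exact base σ hσ h
  · rw [mul_comm]
    simpa using base σ⁻¹ (inv_pos.2 hσ) (inv_le_one_of_one_le₀ h.le)

lemma one_add_excess_add {x y : ℝ} (hx : 0 < x) (hy : 1 ≤ y) :
    1 + excess φ (x + y - 1) = excess φ x * (1 + excess φ (y / x)) := by
  have hE := hφ.excess_mul_one_add h1 (div_pos hx (by linarith)) (div_le_self hx.le hy)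
  rw [div_div_cancel₀ hx.ne'] at hE
  have hinv := hφ.excess_mul_excess_inv h1 hmono (div_pos hx (by linarith : (0 : ℝ) < y))
  rw [inv_div] at hinv
  linear_combination -excess φ (y / x) * hE + (excess φ x - 1 - excess φ (x + y - 1)) * hinv

lemma excess_mul_excess_div {x y : ℝ} (hx : 1 ≤ x) (hy : 1 ≤ y) :
    excess φ x * excess φ (y / x) = excess φ y := by
  have hx0 : 0 < x := by linarith
  have hy0 : 0 < y := by linarith
  have hxy := hφ.one_add_excess_add h1 hmono hx0 hy
  have hyx := hφ.one_add_excess_add h1 hmono hy0 hx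
  rw [add_comm y x] at hyx
  have hinv := hφ.excess_mul_excess_inv h1 hmono (div_pos hx0 hy0)
  rw [inv_div] at hinv
  have hc : 0 < excess φ (y / x) := excess_pos hmono h1 (div_pos hy0 hx0)
  have hfac : (excess φ x * excess φ (y / x) - excess φ y) * (1 + excess φ (y / x)) = 0 := by
    linear_combination excess φ (y / x) * (hyx.symm.trans hxy).symm + excess φ y * hinv
  exact sub_eq_zero.1 ((mul_eq_zero.1 hfac).resolve_right (by linarith))

lemma excess_mul {x y : ℝ} (hx : 1 ≤ x) (hy : 1 ≤ y) :
    excess φ (x * y) = excess φ x * excess φ y := by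
  rw [← hφ.excess_mul_excess_div h1 hmono hx (one_le_mul_of_one_le_of_one_le hx hy),
    mul_div_cancel_left₀ y (by positivity)]

lemma excess_add_sub_one {x y : ℝ} (hx : 1 ≤ x) (hy : 1 ≤ y) :
    excess φ (x + y - 1) = excess φ x + excess φ y - 1 := by
  rw [← hφ.excess_mul_excess_div h1 hmono hx hy]
  linear_combination hφ.one_add_excess_add h1 hmono (x := x) (by linarith) hy

lemma excess_two : excess φ 2 = 2 := by
  have h3 := hφ.excess_add_sub_one h1 hmono one_le_two one_le_two
  have h4 := hφ.excess_add_sub_one h1 hmono one_le_two (by norm_num : (1 : ℝ) ≤ 3)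
  have h22 := hφ.excess_mul h1 hmono one_le_two one_le_two
  norm_num at h3 h4 h22
  have hgt : 1 < excess φ 2 :=
    hφ.excess_one h1 hmono ▸ excess_lt_excess hmono zero_le_one one_lt_two
  have hfac : (excess φ 2 - 1) * (excess φ 2 - 2) = 0 := by
    linear_combination h4 + h3 - h22
  rcases mul_eq_zero.1 hfac with h | h <;> linarith

lemma excess_two_pow (n : ℕ) : excess φ (2 ^ n) = 2 ^ n := by
  induction n with
  | zero => simpa using hφ.excess_one h1 hmono
  | succ n ih =>
    rw [pow_succ, hφ.excess_mul h1 hmono (one_le_pow₀ one_le_two) one_le_two, ih,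
      hφ.excess_two h1 hmono]

lemma excess_pow {x : ℝ} (hx : 1 ≤ x) (n : ℕ) : excess φ (x ^ n) = excess φ x ^ n := by
  induction n with
  | zero => simpa using hφ.excess_one h1 hmono
  | succ n ih => rw [pow_succ, hφ.excess_mul h1 hmono (one_le_pow₀ hx) hx, ih, pow_succ]

lemma excess_le_two_mul_and_le_two_mul_excess {y : ℝ} (hy : 1 ≤ y) :
    excess φ y ≤ 2 * y ∧ y ≤ 2 * excess φ y := by
  obtain ⟨n, hn, hn'⟩ := exists_nat_pow_near hy one_lt_two
  have h2n : (0 : ℝ) ≤ 2 ^ n := by positivity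
  constructor
  · calc excess φ y ≤ excess φ (2 ^ (n + 1)) := excess_le_excess hmono (by linarith) hn'.le
      _ = 2 * 2 ^ n := by rw [hφ.excess_two_pow h1 hmono, pow_succ']
      _ ≤ 2 * y := by linarith
  · calc y ≤ 2 * 2 ^ n := by rw [← pow_succ']; exact hn'.le
      _ = 2 * excess φ (2 ^ n) := by rw [hφ.excess_two_pow h1 hmono]
      _ ≤ 2 * excess φ y := by linarith [excess_le_excess hmono h2n hn]

lemma excess_eq_self_of_one_le {x : ℝ} (hx : 1 ≤ x) : excess φ x = x := by
  have hq : 0 < excess φ x := excess_pos hmono h1 (by linarith)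
  have hbounds := fun n : ℕ =>
    hφ.excess_pow h1 hmono hx n ▸ hφ.excess_le_two_mul_and_le_two_mul_excess h1 hmono
      (one_le_pow₀ hx : 1 ≤ x ^ n)
  exact le_antisymm (le_of_forall_pow_le_two_mul (by linarith) fun n => (hbounds n).1)
    (le_of_forall_pow_le_two_mul hq fun n => (hbounds n).2)

lemma excess_eq_self {u : ℝ} (hu : 0 < u) : excess φ u = u := by
  rcases le_or_gt 1 u with h | h
  · exact hφ.excess_eq_self_of_one_le h1 hmono h
  · have := hφ.excess_mul_excess_inv h1 hmono hu
    rw [hφ.excess_eq_self_of_one_le h1 hmono (one_le_inv₀ hu |>.2 h.le)] at this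
    field_simp at this
    linarith

lemma eqOn_id : EqOn φ id (Ici 0) := by
  have hφ_ge : ∀ {w : ℝ}, 1 ≤ w → φ w = w := fun {w} hw => by
    rcases hw.eq_or_lt with rfl | hw
    · exact h1
    · have := hφ.excess_eq_self h1 hmono (by linarith : 0 < w - 1)
      rw [excess, add_sub_cancel] at this
      linarith
  intro T hT
  rcases le_or_gt 1 T with hT1 | hT1
  · exact hφ_ge hT1
  · have := @hφ 2 1 (2 - T) T le_rfl one_le_two hT (by linarith) (by ring)
    rw [hφ_ge le_rfl, hφ_ge one_le_two, hφ_ge (by linarith : (1 : ℝ) ≤ 2 - T)] at this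
    simp only [id]
    linarith

end PreservesTwoStepRelation

noncomputable def twoStep (a₁ a₂ b₁ b₂ : ℝ) : ℝ → ℝ :=
  (Ioc 0 a₁).indicator (fun _ => b₁) + (Ioc a₁ a₂).indicator (fun _ => b₂)

structure TwoStepParams (a₁ a₂ b₁ b₂ : ℝ) : Prop where
  a₁_pos : 0 < a₁
  a₁_le_a₂ : a₁ ≤ a₂
  a₂_le_one : a₂ ≤ 1
  b₂_nonneg : 0 ≤ b₂
  b₂_le_b₁ : b₂ ≤ b₁
  b₁_pos : 0 < b₁

section twoStep

variable {a₁ a₂ b₁ b₂ : ℝ}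

lemma measurable_twoStep : Measurable (twoStep a₁ a₂ b₁ b₂) :=
  (measurable_const.indicator measurableSet_Ioc).add
    (measurable_const.indicator measurableSet_Ioc)

lemma twoStep_apply (ha : 0 ≤ a₁) (y : ℝ) :
    twoStep a₁ a₂ b₁ b₂ y =
      if y ≤ 0 then 0 else if y ≤ a₁ then b₁ else if y ≤ a₂ then b₂ else 0 := by
  simp only [twoStep, Pi.add_apply, indicator, mem_Ioc]
  split_ifs <;> grind

lemma apply_twoStep {Φ : ℝ → ℝ} (hΦ : Φ 0 = 0) {a₁' a₂' x y : ℝ} (ha : 0 ≤ a₁) (ha' : 0 ≤ a₁')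
    (hy : 0 < y) (hx : 0 < x) (h₁ : y ≤ a₁ ↔ x ≤ a₁') (h₂ : y ≤ a₂ ↔ x ≤ a₂') :
    Φ (twoStep a₁ a₂ b₁ b₂ y) = twoStep a₁' a₂' (Φ b₁) (Φ b₂) x := by
  simp only [twoStep_apply ha, twoStep_apply ha', not_le.2 hy, not_le.2 hx, h₁, h₂, if_false]
  split_ifs <;> simp [hΦ]

lemma integral_twoStep (ha₁ : 0 ≤ a₁) (ha : a₁ ≤ a₂) (ha₂ : a₂ ≤ 1) :
    ∫ x in Icc 0 1, twoStep a₁ a₂ b₁ b₂ x = b₁ * a₁ + b₂ * (a₂ - a₁) := by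
  have hsub : ∀ {u v : ℝ}, 0 ≤ u → v ≤ 1 → Ioc u v ∩ Icc 0 1 = Ioc u v := fun hu hv =>
    inter_eq_left.2 fun x hx => ⟨hu.trans hx.1.le, hx.2.trans hv⟩
  simp only [twoStep, Pi.add_apply]
  rw [integral_add ((integrable_const _).indicator measurableSet_Ioc)
      ((integrable_const _).indicator measurableSet_Ioc),
    integral_indicator_const _ measurableSet_Ioc, integral_indicator_const _ measurableSet_Ioc,
    measureReal_restrict_apply measurableSet_Ioc, measureReal_restrict_apply measurableSet_Ioc,
    hsub le_rfl (ha.trans ha₂), hsub ha₁ ha₂, Real.volume_real_Ioc_of_le ha₁,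
    Real.volume_real_Ioc_of_le ha, smul_eq_mul, smul_eq_mul]
  ring

variable (hp : TwoStepParams a₁ a₂ b₁ b₂)
include hp

lemma TwoStepParams.twoStep_nonneg (y : ℝ) : 0 ≤ twoStep a₁ a₂ b₁ b₂ y := by
  have := hp.b₂_nonneg; have := hp.b₂_le_b₁
  rw [twoStep_apply hp.a₁_pos.le]
  split_ifs <;> linarith

lemma TwoStepParams.le_twoStep_iff {t x : ℝ} (ht : 0 < t) (hx : 0 < x) :
    t ≤ twoStep a₁ a₂ b₁ b₂ x ↔ x ≤ if t ≤ b₂ then a₂ else if t ≤ b₁ then a₁ else 0 := by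
  have := hp.a₁_le_a₂; have := hp.b₂_le_b₁
  rw [twoStep_apply hp.a₁_pos.le, if_neg (not_le.2 hx)]
  split_ifs <;> constructor <;> intro <;> linarith

lemma TwoStepParams.superlevel_eq {t : ℝ} (ht : 0 < t) :
    {y ∈ Icc (0 : ℝ) 1 | t ≤ |twoStep a₁ a₂ b₁ b₂ y|} =
      Ioc 0 (if t ≤ b₂ then a₂ else if t ≤ b₁ then a₁ else 0) := by
  have hle : (if t ≤ b₂ then a₂ else if t ≤ b₁ then a₁ else 0) ≤ 1 := by
    have := hp.a₁_le_a₂; have := hp.a₂_le_one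
    split_ifs <;> linarith
  ext y
  simp only [mem_ofPred_eq, mem_Icc, mem_Ioc, abs_of_nonneg (hp.twoStep_nonneg y)]
  rcases le_or_gt y 0 with hy | hy
  · have : twoStep a₁ a₂ b₁ b₂ y = 0 := by rw [twoStep_apply hp.a₁_pos.le, if_pos hy]
    constructor <;> intro h <;> linarith [h.2]
  · rw [hp.le_twoStep_iff ht hy]
    constructor
    · exact fun h => ⟨hy, h.2⟩
    · exact fun h => ⟨⟨hy.le, h.2.trans hle⟩, h.2⟩

lemma TwoStepParams.decRearr_twoStep {x : ℝ} (hx : x ∈ Ioc (0 : ℝ) 1) :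
    decRearr (twoStep a₁ a₂ b₁ b₂) x = twoStep a₁ a₂ b₁ b₂ x := by
  suffices {t : ℝ | x ≤ (volume {y ∈ Icc (0 : ℝ) 1 | t ≤ |twoStep a₁ a₂ b₁ b₂ y|}).toReal} =
      Iic (twoStep a₁ a₂ b₁ b₂ x) by
    rw [decRearr, this, csSup_Iic]
  ext t
  rcases le_or_gt t 0 with ht | ht
  · have hall : {y ∈ Icc (0 : ℝ) 1 | t ≤ |twoStep a₁ a₂ b₁ b₂ y|} = Icc 0 1 :=
      sep_eq_self_iff_mem_true.2 fun y _ => ht.trans (abs_nonneg _)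
    simp only [mem_ofPred_eq, mem_Iic, hall, Real.volume_Icc, sub_zero,
      ENNReal.toReal_ofReal zero_le_one]
    exact iff_of_true hx.2 (ht.trans (hp.twoStep_nonneg x))
  · have hm : 0 ≤ (if t ≤ b₂ then a₂ else if t ≤ b₁ then a₁ else 0) := by
      have := hp.a₁_pos; have := hp.a₁_le_a₂
      split_ifs <;> linarith
    rw [mem_ofPred_eq, hp.superlevel_eq ht, Real.volume_Ioc, sub_zero, ENNReal.toReal_ofReal hm,
      mem_Iic, hp.le_twoStep_iff ht hx.1]

end twoStep

noncomputable def twoStepModular (K : ℝ → ℝ) (a₁ a₂ b₁ b₂ : ℝ) : ℝ :=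
  K b₁ * phiTilde K a₁ + K b₂ * (phiTilde K a₂ - phiTilde K a₁)

lemma sInf_setOf_le_one_of_eq_one {I : ℝ → ℝ} (hI : StrictAntiOn I (Ioi 0)) {a : ℝ}
    (ha : 0 < a) (h : I a = 1) : sInf {c : ℝ | 0 < c ∧ I c ≤ 1} = a := by
  suffices {c : ℝ | 0 < c ∧ I c ≤ 1} = Ici a by rw [this, csInf_Ici]
  ext c
  refine ⟨fun ⟨hc, hIc⟩ => mem_Ici.2 (not_lt.1 fun hca => ?_), fun hac => ?_⟩
  · exact (h ▸ hI hc ha hca).not_ge hIc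
  · exact ⟨ha.trans_le hac, h ▸ hI.antitoneOn ha (ha.trans_le hac) hac⟩

lemma eq_one_of_sInf_setOf_le_one {I : ℝ → ℝ} (hI : AntitoneOn I (Ioi 0)) {a : ℝ} (ha : 0 < a)
    (hcont : ContinuousAt I a) (h : sInf {c : ℝ | 0 < c ∧ I c ≤ 1} = a) : I a = 1 := by
  set S := {c : ℝ | 0 < c ∧ I c ≤ 1}
  rcases lt_trichotomy (I a) 1 with hlt | heq | hgt
  · obtain ⟨ε, hε, hball⟩ := Metric.eventually_nhds_iff.1 (hcont.eventually (gt_mem_nhds hlt))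
    set c := max (a / 2) (a - ε / 2)
    have hc : c ∈ S := by
      refine ⟨lt_max_of_lt_left (half_pos ha), (hball ?_).le⟩
      rw [Real.dist_eq, abs_sub_lt_iff]
      constructor <;> cases max_cases (a / 2) (a - ε / 2) <;> linarith
    have := csInf_le ⟨0, fun c hc => hc.1.le⟩ hc
    have : c < a := max_lt (half_lt_self ha) (by linarith)
    linarith
  · exact heq
  · obtain ⟨ε, hε, hball⟩ := Metric.eventually_nhds_iff.1 (hcont.eventually (lt_mem_nhds hgt))
    have hIε : 1 < I (a + ε / 2) := hball (by rw [Real.dist_eq, abs_lt]; constructor <;> linarith)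
    have hne : S.Nonempty := by
      by_contra hS
      rw [not_nonempty_iff_eq_empty.1 hS, Real.sInf_empty] at h
      exact ha.ne h
    have : a + ε / 2 ≤ sInf S := le_csInf hne fun c ⟨hc, hIc⟩ => not_lt.1 fun hlt => by
      have := hI hc (show a + ε / 2 ∈ Ioi 0 from mem_Ioi.2 (by linarith)) hlt.le
      linarith
    linarith

section modular

variable {K : ℝ → ℝ} {a₁ a₂ b₁ b₂ : ℝ} (hK : IsPhiFun K) (hp : TwoStepParams a₁ a₂ b₁ b₂)
include hK hp

lemma TwoStepParams.phiTilde_bounds :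
    0 < phiTilde K a₁ ∧ phiTilde K a₁ ≤ phiTilde K a₂ ∧ phiTilde K a₂ ≤ 1 := by
  have ha₂ : a₂ ∈ Ioi 0 := hp.a₁_pos.trans_le hp.a₁_le_a₂
  refine ⟨phiTilde_pos hK hp.a₁_pos,
    (strictMonoOn_phiTilde hK).monotoneOn hp.a₁_pos ha₂ hp.a₁_le_a₂, ?_⟩
  rw [← phiTilde_one hK]
  exact (strictMonoOn_phiTilde hK).monotoneOn ha₂ (mem_Ioi.2 one_pos) hp.a₂_le_one

lemma TwoStepParams.integral_luxNorm (c : ℝ) :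
    ∫ x in Icc 0 1,
        K (|decRearr (twoStep a₁ a₂ b₁ b₂) (phiTilde (fun t => t)
          (Function.invFun (phiTilde K) x))| / c) =
      twoStepModular K a₁ a₂ (b₁ / c) (b₂ / c) := by
  obtain ⟨hA₁, hA, hA₂⟩ := hp.phiTilde_bounds hK
  have hEq : EqOn (fun x => K (|decRearr (twoStep a₁ a₂ b₁ b₂)
        (phiTilde (fun t => t) (Function.invFun (phiTilde K) x))| / c))
      (twoStep (phiTilde K a₁) (phiTilde K a₂) (K (b₁ / c)) (K (b₂ / c))) (Ioc 0 1) := by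
    intro x hx
    obtain ⟨hy, hyx⟩ := phiTilde_invFun hK hx.1
    set y := Function.invFun (phiTilde K) x
    have hle : ∀ {a}, 0 < a → (y ≤ a ↔ x ≤ phiTilde K a) := fun ha =>
      hyx ▸ ((strictMonoOn_phiTilde hK).le_iff_le hy ha).symm
    have hy1 : y ≤ 1 := (hle one_pos).2 (by rw [phiTilde_one hK]; exact hx.2)
    simp only
    rw [phiTilde_id_of_pos hy, hp.decRearr_twoStep ⟨hy, hy1⟩,
      abs_of_nonneg (hp.twoStep_nonneg y)]
    exact apply_twoStep (Φ := fun v => K (v / c)) (by rw [zero_div, hK.zero]) hp.a₁_pos.le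
      hA₁.le hy hx.1 (hle hp.a₁_pos) (hle (hp.a₁_pos.trans_le hp.a₁_le_a₂))
  rw [integral_Icc_eq_integral_Ioc, setIntegral_congr_fun measurableSet_Ioc hEq,
    ← integral_Icc_eq_integral_Ioc, integral_twoStep hA₁.le hA hA₂, twoStepModular]

lemma TwoStepParams.strictAntiOn_modular :
    StrictAntiOn (fun c => twoStepModular K a₁ a₂ (b₁ / c) (b₂ / c)) (Ioi 0) := by
  obtain ⟨hA₁, hA, -⟩ := hp.phiTilde_bounds hK
  intro c (hc : 0 < c) c' (hc' : 0 < c') hcc'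
  have h₁ : K (b₁ / c') < K (b₁ / c) :=
    hK.strictMono (div_nonneg hp.b₁_pos.le hc'.le) (div_nonneg hp.b₁_pos.le (le_of_lt hc))
      (div_lt_div_of_pos_left hp.b₁_pos hc hcc')
  have h₂ : K (b₂ / c') ≤ K (b₂ / c) :=
    hK.strictMono.monotoneOn (div_nonneg hp.b₂_nonneg hc'.le)
      (div_nonneg hp.b₂_nonneg (le_of_lt hc)) (div_le_div_of_nonneg_left hp.b₂_nonneg hc hcc'.le)
  simp only [twoStepModular]
  nlinarith [mul_le_mul_of_nonneg_right h₂ (sub_nonneg.2 hA)]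

lemma TwoStepParams.continuousOn_modular :
    ContinuousOn (fun c => twoStepModular K a₁ a₂ (b₁ / c) (b₂ / c)) (Ioi 0) := by
  have hK_div : ∀ {b : ℝ}, 0 ≤ b → ContinuousOn (fun c => K (b / c)) (Ioi 0) := fun hb =>
    hK.cont.comp (continuousOn_const.div continuousOn_id fun _ hc => ne_of_gt hc)
      fun _ hc => div_nonneg hb (le_of_lt hc)
  exact ((hK_div hp.b₁_pos.le).mul continuousOn_const).add
    ((hK_div hp.b₂_nonneg).mul continuousOn_const)

lemma TwoStepParams.olNorm_eq_one_iff :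
    olNorm (fun t => t) K (twoStep a₁ a₂ b₁ b₂) = 1 ↔ twoStepModular K a₁ a₂ b₁ b₂ = 1 := by
  have hI := hp.strictAntiOn_modular hK
  simp only [olNorm, luxNorm, hp.integral_luxNorm hK]
  refine ⟨fun h => ?_, fun h => ?_⟩
  · simpa using eq_one_of_sInf_setOf_le_one hI.antitoneOn one_pos
      ((hp.continuousOn_modular hK).continuousAt (Ioi_mem_nhds one_pos)) h
  · exact sInf_setOf_le_one_of_eq_one hI one_pos (by simpa using h)

end modular

lemma twoStepModular_inv_inv_eq_one_iff {K : ℝ → ℝ} (hK : IsPhiFun K) {s₁ s₂ b₁ b₂ : ℝ}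
    (hs₁ : 0 < s₁) (hs₂ : 0 < s₂) :
    twoStepModular K s₁⁻¹ s₂⁻¹ b₁ b₂ = 1 ↔ K b₁ * K s₂ + K b₂ * (K s₁ - K s₂) = K s₁ * K s₂ := by
  have h₁ := hK.pos_s6 hs₁
  have h₂ := hK.pos_s6 hs₂
  rw [twoStepModular, phiTilde_inv hs₁, phiTilde_inv hs₂]
  constructor <;> intro h
  · field_simp at h
    linear_combination h
  · field_simp
    linear_combination h

section olNorm_eq

variable {G₁ G₂ : ℝ → ℝ} (hG₁ : IsPhiFun G₁) (hG₂ : IsPhiFun G₂)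
  (h : ∀ f : ℝ → ℝ, Measurable f → olNorm (fun t => t) G₁ f = olNorm (fun t => t) G₂ f)
include hG₁ hG₂ h

lemma twoStepModular_eq_one_transfer {a₁ a₂ b₁ b₂ : ℝ} (hp : TwoStepParams a₁ a₂ b₁ b₂)
    (h₁ : twoStepModular G₁ a₁ a₂ b₁ b₂ = 1) : twoStepModular G₂ a₁ a₂ b₁ b₂ = 1 := by
  rw [← hp.olNorm_eq_one_iff hG₂, ← h _ measurable_twoStep, hp.olNorm_eq_one_iff hG₁]
  exact h₁

lemma preservesTwoStepRelation_comp_invFunOn :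
    PreservesTwoStepRelation (G₂ ∘ Function.invFunOn G₁ (Ici 0)) := by
  intro U₁ U₂ B₁ B₂ hU₂ hU hB₂ hB hrel
  have hB₁ : 0 < B₁ := by nlinarith
  obtain ⟨hs₁, hGs₁⟩ := hG₁.apply_invFunOn (show 0 ≤ U₁ by linarith)
  obtain ⟨hs₂, hGs₂⟩ := hG₁.apply_invFunOn (show 0 ≤ U₂ by linarith)
  obtain ⟨hb₁, hGb₁⟩ := hG₁.apply_invFunOn hB₁.le
  obtain ⟨hb₂, hGb₂⟩ := hG₁.apply_invFunOn hB₂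
  set g := Function.invFunOn G₁ (Ici 0)
  have hs₂1 : 1 ≤ g U₂ := (hG₁.le_invFunOn_iff zero_le_one (by linarith)).2 (by rwa [hG₁.one])
  have hs₂s₁ : g U₂ ≤ g U₁ := (hG₁.le_invFunOn_iff hs₂ (by linarith)).2 (by rwa [hGs₂])
  have hp : TwoStepParams (g U₁)⁻¹ (g U₂)⁻¹ (g B₁) (g B₂) :=
    ⟨inv_pos.2 (by linarith), inv_anti₀ (by linarith) hs₂s₁, inv_le_one_of_one_le₀ hs₂1, hb₂,
      (hG₁.le_invFunOn_iff hb₂ hB₁.le).2 (by rwa [hGb₂]),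
      hb₁.lt_of_ne fun h0 => hB₁.ne' (by rw [← hGb₁, ← h0, hG₁.zero])⟩
  have hpos₂ : 0 < g U₂ := by linarith
  have hpos₁ : 0 < g U₁ := inv_pos.1 hp.a₁_pos
  have := twoStepModular_eq_one_transfer hG₁ hG₂ h hp
    ((twoStepModular_inv_inv_eq_one_iff hG₁ hpos₁ hpos₂).2 (by rwa [hGs₁, hGs₂, hGb₁, hGb₂]))
  exact (twoStepModular_inv_inv_eq_one_iff hG₂ hpos₁ hpos₂).1 this

lemma eqOn_of_olNorm_eq : EqOn G₁ G₂ (Ici 0) := by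
  have hφ := preservesTwoStepRelation_comp_invFunOn hG₁ hG₂ h
  have hmono : StrictMonoOn (G₂ ∘ Function.invFunOn G₁ (Ici 0)) (Ici 1) := by
    intro u hu v hv huv
    have hu0 : (0 : ℝ) ≤ u := zero_le_one.trans hu
    obtain ⟨hgu, -⟩ := hG₁.apply_invFunOn hu0
    obtain ⟨hgv, hGgv⟩ := hG₁.apply_invFunOn (hu0.trans huv.le)
    refine hG₂.strictMono hgu hgv (not_le.1 fun hle => ?_)
    rw [hG₁.le_invFunOn_iff hgv hu0, hGgv] at hle
    exact (not_le.2 huv) hle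
  have h1 : (G₂ ∘ Function.invFunOn G₁ (Ici 0)) 1 = 1 := by
    rw [Function.comp_apply, ← hG₁.one, hG₁.invFunOn_apply zero_le_one, hG₂.one, hG₁.one]
  intro t ht
  have := hφ.eqOn_id h1 hmono (hG₁.nonneg ht)
  rwa [Function.comp_apply, hG₁.invFunOn_apply ht, id, eq_comm] at this

end olNorm_eq

lemma olNorm_congr_of_eqOn {F G G' : ℝ → ℝ} (hG : EqOn G G' (Ici 0)) (f : ℝ → ℝ) :
    olNorm F G f = olNorm F G' f := by
  have hTilde : phiTilde G = phiTilde G' := funext fun t => by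
    unfold phiTilde
    split_ifs with ht
    · rw [hG (inv_pos.2 ht).le]
    · rfl
  simp only [olNorm, luxNorm, hTilde]
  congr 1
  ext c
  refine and_congr_right fun hc => ?_
  rw [integral_congr_ae (Eventually.of_forall fun x => hG (div_nonneg (abs_nonneg _) hc.le))]

/-- for φ-functions `G₁, G₂, H`: if `‖f‖_{1,G₁} = ‖f‖_{1,G₂}` for all
measurable `f`, then `‖f‖_{1,G₁∘H} = ‖f‖_{1,G₂∘H}` for all measurable `f`. -/
theorem stmt_6 (G₁ G₂ H : ℝ → ℝ) (hG₁ : IsPhiFun G₁) (hG₂ : IsPhiFun G₂) (hH : IsPhiFun H)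
    (h : ∀ f : ℝ → ℝ, Measurable f → olNorm (fun t => t) G₁ f = olNorm (fun t => t) G₂ f) :
    ∀ f : ℝ → ℝ, Measurable f →
      olNorm (fun t => t) (G₁ ∘ H) f = olNorm (fun t => t) (G₂ ∘ H) f := by
  intro f _
  have hG : EqOn G₁ G₂ (Ici 0) := eqOn_of_olNorm_eq hG₁ hG₂ h
  exact olNorm_congr_of_eqOn (fun t ht => hG (hH.nonneg ht)) f
end

section
/- Let φ(t) = t^5·exp(sin(ln t)) for t > 0 and φ(0) = 0. Then φ is an Orlicz function (convex, increasing, φ(0) = 0), and its multiplier group {c > 0 : φ(ct) = φ(c)φ(t) for all t > 0} equals {e^{2πk} : k ∈ ℤ}. -/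
open Set Real

/-- The Orlicz function `φ(t) = t^5 exp(sin(ln t))` for `t > 0`, `φ(0) = 0`
(also `0` for `t < 0`). -/
noncomputable def phiEx (t : ℝ) : ℝ :=
  if 0 < t then t ^ 5 * Real.exp (Real.sin (Real.log t)) else 0

/-!
Write `φ(t) = t⁵ e^{sin ln t}`. For `t > 0`,
`φ'(t) = t⁴ e^{sin ln t} (5 + cos ln t)` and
`φ''(t) = t³ e^{sin ln t} (20 + 9 cos ln t + cos² ln t - sin ln t)`, and both brackets are
positive since `|sin|, |cos| ≤ 1`; this gives strict monotonicity and strict convexity.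
In logarithmic coordinates `φ(eᵘ) = e^{5u + sin u}`, so `c = eᵃ` is a multiplier iff
`sin (a + u) = sin a + sin u` for all `u`; taking `u = ±π/2` forces `cos a = 1`.
-/

lemma phiEx_of_pos {t : ℝ} (ht : 0 < t) : phiEx t = t ^ 5 * exp (sin (log t)) := if_pos ht

lemma phiEx_eqOn_Ici : EqOn phiEx (fun t ↦ t ^ 5 * exp (sin (log t))) (Ici 0) := by
  intro t ht
  rcases (mem_Ici.mp ht).eq_or_lt with rfl | ht
  · simp [phiEx]
  · exact phiEx_of_pos ht

/-- `log` is discontinuous at `0`, but the bounded factor `exp (sin (log t))` is killed by `t⁵`. -/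
lemma continuous_pow_five_mul_exp_sin_log : Continuous fun t : ℝ ↦ t ^ 5 * exp (sin (log t)) := by
  refine continuous_iff_continuousAt.2 fun x ↦ ?_
  rcases eq_or_ne x 0 with rfl | hx
  · have hbdd : Filter.IsBoundedUnder (· ≤ ·) (nhds (0 : ℝ))
        ((fun y ↦ ‖y‖) ∘ fun t ↦ exp (sin (log t))) :=
      Filter.isBoundedUnder_of ⟨exp 1, fun t ↦ by
        simpa [abs_of_pos (exp_pos _)] using exp_le_exp.2 (sin_le_one (log t))⟩
    have hpow : Filter.Tendsto (fun t : ℝ ↦ t ^ 5) (nhds 0) (nhds 0) := by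
      simpa using (continuous_pow 5).tendsto (0 : ℝ)
    simpa [ContinuousAt] using hpow.zero_mul_isBoundedUnder_le hbdd
  · exact (continuousAt_id.pow 5).mul
      ((continuous_exp.comp continuous_sin).continuousAt.comp (continuousAt_log hx))

lemma continuousOn_phiEx : ContinuousOn phiEx (Ici 0) :=
  continuous_pow_five_mul_exp_sin_log.continuousOn.congr phiEx_eqOn_Ici

lemma phiEx_eventuallyEq {x : ℝ} (hx : 0 < x) :
    phiEx =ᶠ[nhds x] fun t ↦ t ^ 5 * exp (sin (log t)) := by
  filter_upwards [Ioi_mem_nhds hx] with t ht using phiEx_of_pos ht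

lemma hasDerivAt_phiEx {x : ℝ} (hx : 0 < x) :
    HasDerivAt phiEx (x ^ 4 * exp (sin (log x)) * (5 + cos (log x))) x := by
  have hlog := hasDerivAt_log hx.ne'
  refine (((hasDerivAt_pow 5 x).mul hlog.sin.exp).congr_of_eventuallyEq
    (phiEx_eventuallyEq hx)).congr_deriv ?_
  field_simp
  ring

lemma hasDerivAt_deriv_phiEx {x : ℝ} (hx : 0 < x) :
    HasDerivAt (deriv phiEx)
      (x ^ 3 * exp (sin (log x)) * (20 + 9 * cos (log x) + cos (log x) ^ 2 - sin (log x))) x := by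
  have hlog := hasDerivAt_log hx.ne'
  have hderiv : deriv phiEx =ᶠ[nhds x] fun t ↦ t ^ 4 * exp (sin (log t)) * (5 + cos (log t)) := by
    filter_upwards [Ioi_mem_nhds hx] with t ht using (hasDerivAt_phiEx ht).deriv
  refine ((((hasDerivAt_pow 4 x).mul hlog.sin.exp).mul (hlog.cos.const_add 5)).congr_of_eventuallyEq
    hderiv).congr_deriv ?_
  simp only [Pi.mul_apply]
  field_simp
  ring

lemma deriv_phiEx_pos {x : ℝ} (hx : 0 < x) : 0 < deriv phiEx x := by
  rw [(hasDerivAt_phiEx hx).deriv]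
  have := neg_one_le_cos (log x)
  have : 0 < 5 + cos (log x) := by linarith
  positivity

lemma deriv_iterate_two_phiEx_pos {x : ℝ} (hx : 0 < x) : 0 < deriv^[2] phiEx x := by
  rw [Function.iterate_succ_apply', Function.iterate_one, (hasDerivAt_deriv_phiEx hx).deriv]
  have := neg_one_le_cos (log x)
  have := sin_le_one (log x)
  have : 0 < 20 + 9 * cos (log x) + cos (log x) ^ 2 - sin (log x) := by
    nlinarith [sq_nonneg (cos (log x))]
  positivity

lemma strictConvexOn_phiEx : StrictConvexOn ℝ (Ici 0) phiEx :=
  strictConvexOn_of_deriv2_pos (convex_Ici 0) continuousOn_phiEx fun _ hx ↦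
    deriv_iterate_two_phiEx_pos (by rwa [interior_Ici] at hx)

lemma strictMonoOn_phiEx : StrictMonoOn phiEx (Ici 0) :=
  strictMonoOn_of_deriv_pos (convex_Ici 0) continuousOn_phiEx fun _ hx ↦
    deriv_phiEx_pos (by rwa [interior_Ici] at hx)

lemma phiEx_exp (u : ℝ) : phiEx (exp u) = exp u ^ 5 * exp (sin u) := by
  rw [phiEx_of_pos (exp_pos u), log_exp]

lemma phiEx_exp_mul_exp_eq_iff (a u : ℝ) :
    phiEx (exp a * exp u) = phiEx (exp a) * phiEx (exp u) ↔ sin (a + u) = sin a + sin u := by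
  rw [← exp_add, phiEx_exp, phiEx_exp, phiEx_exp, exp_add,
    mul_mul_mul_comm, ← mul_pow, ← exp_add (sin a), mul_right_inj' (by positivity), exp_eq_exp]

lemma forall_sin_add_eq_add_sin_iff {a : ℝ} :
    (∀ u, sin (a + u) = sin a + sin u) ↔ ∃ k : ℤ, a = 2 * π * k := by
  constructor
  · intro h
    have hplus := h (π / 2)
    have hminus := h (-(π / 2))
    rw [sin_add_pi_div_two, sin_pi_div_two] at hplus
    rw [← sub_eq_add_neg, sin_sub_pi_div_two, sin_neg, sin_pi_div_two] at hminus
    obtain ⟨k, hk⟩ := (cos_eq_one_iff a).1 (by linarith)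
    exact ⟨k, by rw [← hk]; ring⟩
  · rintro ⟨k, rfl⟩ u
    rw [show 2 * π * k = k * (2 * π) by ring, add_comm, sin_add_int_mul_two_pi,
      sin_periodic.int_mul_eq, sin_zero, zero_add]

lemma forall_phiEx_mul_iff {c : ℝ} (hc : 0 < c) :
    (∀ t, 0 < t → phiEx (c * t) = phiEx c * phiEx t) ↔ ∃ k : ℤ, log c = 2 * π * k := by
  rw [← forall_sin_add_eq_add_sin_iff]
  conv_lhs => rw [← exp_log hc]
  refine ⟨fun h u ↦ (phiEx_exp_mul_exp_eq_iff _ u).1 (h _ (exp_pos u)), fun h t ht ↦ ?_⟩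
  rw [← exp_log ht]
  exact (phiEx_exp_mul_exp_eq_iff _ _).2 (h _)

/-- `φ(t) = t^5 exp(sin ln t)` is an Orlicz function (convex, increasing,
`φ(0)=0`) and its multiplier group `{c > 0 : φ(ct) = φ(c)φ(t) ∀ t > 0}` is
`{e^{2πk} : k ∈ ℤ}`. -/
theorem stmt_14 :
    ConvexOn ℝ (Ici 0) phiEx ∧ StrictMonoOn phiEx (Ici 0) ∧ phiEx 0 = 0 ∧
    {c : ℝ | 0 < c ∧ ∀ t : ℝ, 0 < t → phiEx (c * t) = phiEx c * phiEx t} =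
      {c : ℝ | ∃ k : ℤ, c = Real.exp (2 * Real.pi * k)} := by
  refine ⟨strictConvexOn_phiEx.convexOn, strictMonoOn_phiEx, if_neg (lt_irrefl 0), ?_⟩
  ext c
  constructor
  · rintro ⟨hc, h⟩
    obtain ⟨k, hk⟩ := (forall_phiEx_mul_iff hc).1 h
    exact ⟨k, by rw [← hk, exp_log hc]⟩
  · rintro ⟨k, rfl⟩
    exact ⟨exp_pos _, (forall_phiEx_mul_iff (exp_pos _)).2 ⟨k, log_exp _⟩⟩
end
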